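/- arXiv:2410.20426 — 4 statements merged into one kernel-verified Lean document; each statement's English description precedes it below -/
import Mathlib

section
/- For α ∈ (1,2) and γ ∈ (1, α+1), ∫_0^∞ ∫_ℝ |G_α(1+s, z) - G_α(s, z)|^γ dz ds < ∞, where G_α is the fractional heat kernel. -/
/-!
For `s ≤ 1` the two kernels are estimated separately: scaling and the decay of `G 1` give
`∫ |G t z|^γ dz = O(t^{-(γ-1)/α})`, which is integrable at `0` because `γ < α + 1`.
For `s ≥ 1` one uses the Fourier representation
`G (1+s) z - G s z = π⁻¹ ∫_0^∞ (e^{-(1+s)ξ^α} - e^{-sξ^α}) cos (ξ z) dξ`: the symbol and its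
derivative both have `L¹` norm `O(1/s)`, so, integrating by parts once,
`|G (1+s) z - G s z| = O(s⁻¹ (1+|z|)⁻¹)`. Its `γ`-th power has `z`-integral `O(s^{-γ})`, which is
integrable at `∞` because `γ > 1`.
-/

open MeasureTheory Real Set Filter Topology
open scoped ENNReal NNReal

theorem add_rpow_le_two_rpow_mul {x y p : ℝ} (hx : 0 ≤ x) (hy : 0 ≤ y) (hp : 1 ≤ p) :
    (x + y) ^ p ≤ 2 ^ (p - 1) * (x ^ p + y ^ p) := by
  lift x to ℝ≥0 using hx
  lift y to ℝ≥0 using hy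
  exact_mod_cast NNReal.rpow_add_le_mul_rpow_add_rpow x y hp

theorem abs_sub_rpow_le {a b p : ℝ} (hp : 1 ≤ p) :
    |a - b| ^ p ≤ 2 ^ (p - 1) * (|a| ^ p + |b| ^ p) :=
  (rpow_le_rpow (abs_nonneg _) (abs_sub _ _) (by linarith)).trans
    (add_rpow_le_two_rpow_mul (abs_nonneg _) (abs_nonneg _) hp)

theorem mul_exp_neg_le_exp_neg_half {y : ℝ} (hy : 0 ≤ y) : y * exp (-y) ≤ exp (-(y / 2)) := by
  have hy_le : y ≤ exp (y / 2) := by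
    nlinarith [quadratic_le_exp_of_nonneg (by linarith : 0 ≤ y / 2), sq_nonneg (y - 2)]
  calc y * exp (-y) ≤ exp (y / 2) * exp (-y) := by gcongr
    _ = exp (-(y / 2)) := by rw [← exp_add]; ring_nf

theorem abs_exp_neg_one_add_mul_sub_exp_neg_mul_le {s y : ℝ} (hs : 1 ≤ s) (hy : 0 ≤ y) :
    |exp (-(1 + s) * y) - exp (-s * y)| ≤ s⁻¹ * exp (-(y / 2)) := by
  have hs₀ : 0 < s := by linarith
  have hsplit : exp (-(1 + s) * y) = exp (-s * y) * exp (-y) := by rw [← exp_add]; ring_nf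
  have h1 : 1 - exp (-y) ≤ y := by linarith [add_one_le_exp (-y)]
  have h2 : exp (-y) ≤ 1 := exp_le_one_iff.mpr (by linarith)
  calc |exp (-(1 + s) * y) - exp (-s * y)| = exp (-s * y) * (1 - exp (-y)) := by
        rw [hsplit, abs_sub_comm, abs_of_nonneg (by nlinarith [exp_pos (-s * y)])]; ring
    _ ≤ exp (-s * y) * y := by gcongr
    _ = s⁻¹ * (s * y * exp (-(s * y))) := by field_simp
    _ ≤ s⁻¹ * exp (-(s * y / 2)) := by gcongr; exact mul_exp_neg_le_exp_neg_half (by positivity)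
    _ ≤ s⁻¹ * exp (-(y / 2)) := by gcongr; nlinarith

theorem abs_sub_one_add_mul_exp_neg_le {s y : ℝ} (hs : 0 ≤ s) (hy : 0 ≤ y) :
    |s - (1 + s) * exp (-y)| ≤ 1 + s * y := by
  have h1 : 1 - exp (-y) ≤ y := by linarith [add_one_le_exp (-y)]
  have h2 : exp (-y) ≤ 1 := exp_le_one_iff.mpr (by linarith)
  have h3 := exp_pos (-y)
  rw [abs_le]; constructor <;> nlinarith

theorem le_two_mul_div_one_add_abs {d A z : ℝ} (h : d ≤ A) (hz : d * |z| ≤ A) :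
    d ≤ 2 * A / (1 + |z|) := by
  rw [le_div_iff₀ (by positivity)]; linarith

theorem lintegral_comp_mul_right {a : ℝ} (ha : a ≠ 0) (f : ℝ → ℝ≥0∞) :
    ∫⁻ x, f (x * a) = ENNReal.ofReal |a⁻¹| * ∫⁻ x, f x := by
  rw [← smul_eq_mul, ← lintegral_smul_measure, ← Real.map_volume_mul_right ha,
    (measurableEmbedding_mulRight₀ ha).lintegral_map]

theorem lintegral_rpow_abs_rescale (f : ℝ → ℝ) {α t : ℝ} (ht : 0 < t) (γ : ℝ) :
    ∫⁻ z, ENNReal.ofReal (|t ^ (-(1 / α)) * f (z * t ^ (-(1 / α)))| ^ γ) =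
      ENNReal.ofReal (t ^ (-((γ - 1) / α))) * ∫⁻ u, ENNReal.ofReal (|f u| ^ γ) := by
  set a := t ^ (-(1 / α))
  have ha : 0 < a := rpow_pos_of_pos ht _
  have hpow : a ^ γ * |a⁻¹| = t ^ (-((γ - 1) / α)) := by
    rw [abs_of_pos (inv_pos.mpr ha), ← rpow_neg_one, ← rpow_add ha, ← rpow_mul ht.le]
    ring_nf
  calc ∫⁻ z, ENNReal.ofReal (|a * f (z * a)| ^ γ)
      = ∫⁻ z, ENNReal.ofReal (a ^ γ) * ENNReal.ofReal (|f (z * a)| ^ γ) := by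
        refine lintegral_congr fun z => ?_
        rw [abs_mul, abs_of_pos ha, mul_rpow ha.le (abs_nonneg _),
          ENNReal.ofReal_mul (by positivity)]
    _ = ENNReal.ofReal (t ^ (-((γ - 1) / α))) * ∫⁻ u, ENNReal.ofReal (|f u| ^ γ) := by
        rw [lintegral_const_mul' _ _ ENNReal.ofReal_ne_top,
          lintegral_comp_mul_right (f := fun u => ENNReal.ofReal (|f u| ^ γ)) ha.ne',
          ← mul_assoc, ← ENNReal.ofReal_mul (by positivity), hpow]

theorem integrable_inv_one_add_abs_rpow {β : ℝ} (hβ : 1 < β) :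
    Integrable fun x : ℝ => (1 + |x| ^ β)⁻¹ := by
  have hdom : Integrable fun x : ℝ => 2 ^ (β - 1) * (1 + ‖x‖) ^ (-β) :=
    (integrable_one_add_norm (by simpa using hβ)).const_mul _
  refine hdom.mono' (by fun_prop (disch := positivity)) (ae_of_all _ fun x => ?_)
  have hx : 0 < 1 + |x| ^ β := by positivity
  rw [norm_of_nonneg (inv_nonneg.mpr hx.le), norm_eq_abs, rpow_neg (by positivity),
    ← div_eq_mul_inv, le_div_iff₀ (by positivity), inv_mul_le_iff₀ hx]
  simpa [mul_comm] using add_rpow_le_two_rpow_mul zero_le_one (abs_nonneg x) hβ.le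

theorem lintegral_rpow_abs_lt_top_of_le {g : ℝ → ℝ} {β γ C : ℝ} (hβ : 1 < β) (hγ : 1 ≤ γ)
    (hg : ∀ x, |g x| ≤ C * (1 + |x| ^ β)⁻¹) :
    ∫⁻ x, ENNReal.ofReal (|g x| ^ γ) < ⊤ := by
  refine lt_of_le_of_lt (lintegral_mono fun x => ENNReal.ofReal_le_ofReal (?_ : _ ≤
    |C| ^ γ * (1 + |x| ^ β)⁻¹)) ((integrable_inv_one_add_abs_rpow hβ).const_mul _).lintegral_lt_top
  have hw : 0 < (1 + |x| ^ β)⁻¹ := by positivity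
  have hw1 : (1 + |x| ^ β)⁻¹ ≤ 1 := inv_le_one_of_one_le₀ (by simp; positivity)
  calc |g x| ^ γ ≤ (|C| * (1 + |x| ^ β)⁻¹) ^ γ :=
        rpow_le_rpow (abs_nonneg _) ((hg x).trans (by gcongr; exact le_abs_self C)) (by linarith)
    _ = |C| ^ γ * ((1 + |x| ^ β)⁻¹) ^ γ := mul_rpow (abs_nonneg _) hw.le
    _ ≤ |C| ^ γ * (1 + |x| ^ β)⁻¹ := by
        gcongr
        simpa using rpow_le_rpow_of_exponent_ge hw hw1 hγ

theorem setLIntegral_Ioi_lt_top_of_le_rpow {F : ℝ → ℝ≥0∞} {a b : ℝ} {A B : ℝ≥0∞}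
    (ha : a < 1) (hb : 1 < b) (hA : A ≠ ⊤) (hB : B ≠ ⊤)
    (hF₀ : ∀ s ∈ Ioc (0 : ℝ) 1, F s ≤ A * ENNReal.ofReal (s ^ (-a)))
    (hF₁ : ∀ s ∈ Ioi (1 : ℝ), F s ≤ B * ENNReal.ofReal (s ^ (-b))) :
    ∫⁻ s in Ioi 0, F s < ⊤ := by
  have h₀ : ∫⁻ s in Ioc (0 : ℝ) 1, ENNReal.ofReal (s ^ (-a)) < ⊤ := by
    have := intervalIntegral.intervalIntegrable_rpow' (a := 0) (b := 1) (r := -a) (by linarith)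
    rw [intervalIntegrable_iff_integrableOn_Ioc_of_le zero_le_one] at this
    exact this.lintegral_lt_top
  have h₁ : ∫⁻ s in Ioi (1 : ℝ), ENNReal.ofReal (s ^ (-b)) < ⊤ :=
    (integrableOn_Ioi_rpow_of_lt (by linarith) one_pos).lintegral_lt_top
  rw [← Ioc_union_Ioi_eq_Ioi zero_le_one, lintegral_union measurableSet_Ioi Ioc_disjoint_Ioi_same]
  refine ENNReal.add_lt_top.mpr ⟨?_, ?_⟩
  · calc ∫⁻ s in Ioc (0 : ℝ) 1, F s ≤ ∫⁻ s in Ioc (0 : ℝ) 1, A * ENNReal.ofReal (s ^ (-a)) :=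
          setLIntegral_mono' measurableSet_Ioc hF₀
      _ < ⊤ := by rw [lintegral_const_mul' _ _ hA]; exact ENNReal.mul_lt_top hA.lt_top h₀
  · calc ∫⁻ s in Ioi (1 : ℝ), F s ≤ ∫⁻ s in Ioi (1 : ℝ), B * ENNReal.ofReal (s ^ (-b)) :=
          setLIntegral_mono' measurableSet_Ioi hF₁
      _ < ⊤ := by rw [lintegral_const_mul' _ _ hB]; exact ENNReal.mul_lt_top hB.lt_top h₁

section CosineIntegral

variable {φ φ' : ℝ → ℝ}

theorem abs_setIntegral_mul_le_of_abs_le_one {s : Set ℝ} {g : ℝ → ℝ} (hφ : IntegrableOn φ s)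
    (hg : ∀ ξ, |g ξ| ≤ 1) : |∫ ξ in s, φ ξ * g ξ| ≤ ∫ ξ in s, |φ ξ| := by
  refine (abs_integral_le_integral_abs).trans
    (integral_mono_of_nonneg (ae_of_all _ fun ξ => abs_nonneg _) hφ.abs (ae_of_all _ fun ξ => ?_))
  simpa [abs_mul] using mul_le_mul_of_nonneg_left (hg ξ) (abs_nonneg (φ ξ))

theorem abs_integral_Ioi_mul_cos_mul_abs_le (hderiv : ∀ x ∈ Ici (0 : ℝ), HasDerivAt φ (φ' x) x)
    (hφ : IntegrableOn φ (Ioi 0)) (hφ' : IntegrableOn φ' (Ioi 0)) (z : ℝ) :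
    |∫ ξ in Ioi 0, φ ξ * cos (ξ * z)| * |z| ≤ ∫ ξ in Ioi 0, |φ' ξ| := by
  rcases eq_or_ne z 0 with rfl | hz
  · simpa using integral_nonneg fun ξ => abs_nonneg (φ' ξ)
  set v : ℝ → ℝ := fun ξ => sin (ξ * z) / z
  have hv : ∀ x, HasDerivAt v (cos (x * z)) x := fun x => by
    simpa [v, hz] using (((hasDerivAt_id x).mul_const z).sin).div_const z
  have hv_bdd : ∀ ξ, |v ξ| ≤ |z|⁻¹ := fun ξ => by
    simpa [v, abs_div, div_eq_mul_inv] using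
      mul_le_mul_of_nonneg_right (abs_sin_le_one (ξ * z)) (inv_nonneg.mpr (abs_nonneg z))
  have h_zero : Tendsto (φ * v) (𝓝[>] 0) (𝓝 0) := by
    have := ((hderiv 0 self_mem_Ici).continuousAt.mul (hv 0).continuousAt).tendsto
    simpa [v] using this.mono_left nhdsWithin_le_nhds
  have h_infty : Tendsto (φ * v) atTop (𝓝 0) :=
    (tendsto_zero_of_hasDerivAt_of_integrableOn_Ioi (fun x hx => hderiv x (Ioi_subset_Ici_self hx))
      hφ' hφ).zero_mul_isBoundedUnder_le
      (isBoundedUnder_of ⟨|z|⁻¹, fun ξ => by simpa using hv_bdd ξ⟩)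
  have hibp := integral_Ioi_mul_deriv_eq_deriv_mul (fun x hx => hderiv x (Ioi_subset_Ici_self hx))
    (fun x _ => hv x) (hφ.mul_bdd (by fun_prop) (ae_of_all _ fun _ => abs_cos_le_one _))
    (hφ'.mul_bdd (by fun_prop) (ae_of_all _ fun ξ => hv_bdd ξ)) h_zero h_infty
  have hsin : ∫ ξ in Ioi 0, φ' ξ * v ξ = (∫ ξ in Ioi 0, φ' ξ * sin (ξ * z)) / z := by
    simp only [v, mul_div_assoc', integral_div]
  rw [hibp, sub_self, zero_sub, abs_neg, hsin, abs_div, div_mul_cancel₀ _ (abs_ne_zero.mpr hz)]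
  exact abs_setIntegral_mul_le_of_abs_le_one hφ' fun _ => abs_sin_le_one _

theorem abs_integral_Ioi_mul_cos_le (hderiv : ∀ x ∈ Ici (0 : ℝ), HasDerivAt φ (φ' x) x)
    (hφ : IntegrableOn φ (Ioi 0)) (hφ' : IntegrableOn φ' (Ioi 0)) (z : ℝ) :
    |∫ ξ in Ioi 0, φ ξ * cos (ξ * z)| ≤
      2 * max (∫ ξ in Ioi 0, |φ ξ|) (∫ ξ in Ioi 0, |φ' ξ|) / (1 + |z|) :=
  le_two_mul_div_one_add_abs
    ((abs_setIntegral_mul_le_of_abs_le_one hφ fun _ => abs_cos_le_one _).trans (le_max_left _ _))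
    ((abs_integral_Ioi_mul_cos_mul_abs_le hderiv hφ hφ' z).trans (le_max_right _ _))

end CosineIntegral

section ExpRpow

variable {α s : ℝ}

theorem hasDerivAt_exp_neg_mul_rpow (hα : 1 ≤ α) (t x : ℝ) :
    HasDerivAt (fun ξ => exp (-t * ξ ^ α)) (exp (-t * x ^ α) * (-t * (α * x ^ (α - 1)))) x :=
  ((hasDerivAt_rpow_const (Or.inr hα)).const_mul (-t)).exp

theorem integrableOn_exp_neg_mul_rpow (hα : 0 < α) {t : ℝ} (ht : 0 < t) :
    IntegrableOn (fun ξ => exp (-t * ξ ^ α)) (Ioi 0) := by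
  simpa using integrableOn_rpow_mul_exp_neg_mul_rpow (s := 0) (by norm_num) hα ht

theorem hasDerivAt_exp_neg_one_add_mul_rpow_sub (hα : 1 ≤ α) (s x : ℝ) :
    HasDerivAt (fun ξ => exp (-(1 + s) * ξ ^ α) - exp (-s * ξ ^ α))
      (α * x ^ (α - 1) * exp (-s * x ^ α) * (s - (1 + s) * exp (-x ^ α))) x := by
  refine ((hasDerivAt_exp_neg_mul_rpow hα (1 + s) x).sub
    (hasDerivAt_exp_neg_mul_rpow hα s x)).congr_deriv ?_
  have : exp (-(1 + s) * x ^ α) = exp (-s * x ^ α) * exp (-x ^ α) := by rw [← exp_add]; ring_nf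
  rw [this]; ring

theorem integral_Ioi_rpow_mul_one_add_mul_rpow_mul_exp (hα : 1 ≤ α) (hs : 0 < s) :
    IntegrableOn (fun ξ => α * ξ ^ (α - 1) * (1 + s * ξ ^ α) * exp (-s * ξ ^ α)) (Ioi 0) ∧
      ∫ ξ in Ioi 0, α * ξ ^ (α - 1) * (1 + s * ξ ^ α) * exp (-s * ξ ^ α) = 2 / s := by
  have hderiv : ∀ x ∈ Ici (0 : ℝ), HasDerivAt (fun ξ => -(ξ ^ α + 2 / s) * exp (-s * ξ ^ α))
      (α * x ^ (α - 1) * (1 + s * x ^ α) * exp (-s * x ^ α)) x := fun x _ => by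
    refine (((hasDerivAt_rpow_const (Or.inr hα)).add_const (2 / s)).neg.mul
      (hasDerivAt_exp_neg_mul_rpow hα s x)).congr_deriv ?_
    simp only [Pi.neg_apply]
    field_simp; ring
  have hnonneg : ∀ x ∈ Ioi (0 : ℝ), 0 ≤ α * x ^ (α - 1) * (1 + s * x ^ α) * exp (-s * x ^ α) :=
    fun x hx => by
      have := rpow_nonneg (le_of_lt hx) α
      have := rpow_nonneg (le_of_lt hx) (α - 1)
      have : 0 ≤ α := by linarith
      positivity
  have hlim : Tendsto (fun ξ => -(ξ ^ α + 2 / s) * exp (-s * ξ ^ α)) atTop (𝓝 0) := by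
    have hy : Tendsto (fun y : ℝ => -(y + 2 / s) * exp (-s * y)) atTop (𝓝 0) := by
      have h := ((tendsto_rpow_mul_exp_neg_mul_atTop_nhds_zero 1 s hs).add
        ((tendsto_rpow_mul_exp_neg_mul_atTop_nhds_zero 0 s hs).const_mul (2 / s))).neg
      simp only [rpow_one, rpow_zero, one_mul, mul_zero, add_zero, neg_zero] at h
      exact h.congr fun y => by ring
    exact hy.comp (tendsto_rpow_atTop (by linarith))
  refine ⟨integrableOn_Ioi_deriv_of_nonneg' hderiv hnonneg hlim, ?_⟩
  rw [integral_Ioi_of_hasDerivAt_of_nonneg' hderiv hnonneg hlim, zero_rpow (by positivity),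
    mul_zero, exp_zero]
  ring

theorem exists_abs_integral_Ioi_exp_increment_mul_cos_le (hα : 1 ≤ α) :
    ∃ M ≥ 0, ∀ s ≥ 1, ∀ z : ℝ,
      |∫ ξ in Ioi 0, (exp (-(1 + s) * ξ ^ α) - exp (-s * ξ ^ α)) * cos (ξ * z)| ≤
        M * (s⁻¹ * (1 + |z|)⁻¹) := by
  set K := ∫ ξ in Ioi (0 : ℝ), exp (-(1 / 2) * ξ ^ α)
  refine ⟨2 * max K 2, by positivity, fun s hs z => ?_⟩
  have hs₀ : 0 < s := by linarith
  have hα₀ : 0 < α := by linarith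
  set φ := fun ξ : ℝ => exp (-(1 + s) * ξ ^ α) - exp (-s * ξ ^ α)
  set φ' := fun ξ : ℝ => α * ξ ^ (α - 1) * exp (-s * ξ ^ α) * (s - (1 + s) * exp (-ξ ^ α))
  set u := fun ξ : ℝ => α * ξ ^ (α - 1) * (1 + s * ξ ^ α) * exp (-s * ξ ^ α)
  obtain ⟨hu, hu_eq⟩ := integral_Ioi_rpow_mul_one_add_mul_rpow_mul_exp hα hs₀
  have hφ : IntegrableOn φ (Ioi 0) :=
    (integrableOn_exp_neg_mul_rpow hα₀ (by linarith)).sub (integrableOn_exp_neg_mul_rpow hα₀ hs₀)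
  have hφ'_le : ∀ ξ ∈ Ioi (0 : ℝ), |φ' ξ| ≤ u ξ := fun ξ hξ => by
    have hy := rpow_nonneg (le_of_lt hξ) α
    have := rpow_nonneg (le_of_lt hξ) (α - 1)
    simp only [φ', u]
    rw [abs_mul, abs_of_nonneg (by positivity), mul_right_comm]
    gcongr
    exact abs_sub_one_add_mul_exp_neg_le hs₀.le hy
  have hφ' : IntegrableOn φ' (Ioi 0) :=
    hu.mono' (by fun_prop (disch := linarith))
      ((ae_restrict_iff' measurableSet_Ioi).mpr (ae_of_all _ hφ'_le))
  have hφ_int : ∫ ξ in Ioi 0, |φ ξ| ≤ K * s⁻¹ := by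
    rw [mul_comm, ← integral_const_mul]
    exact setIntegral_mono_on hφ.abs
      ((integrableOn_exp_neg_mul_rpow hα₀ one_half_pos).const_mul _) measurableSet_Ioi
      fun ξ hξ => by
        simpa [φ, div_eq_inv_mul] using abs_exp_neg_one_add_mul_sub_exp_neg_mul_le hs
          (rpow_nonneg (le_of_lt hξ) α)
  have hφ'_int : ∫ ξ in Ioi 0, |φ' ξ| ≤ 2 * s⁻¹ :=
    (setIntegral_mono_on hφ'.abs hu measurableSet_Ioi hφ'_le).trans (by rw [hu_eq, div_eq_mul_inv])
  calc _ ≤ 2 * max (∫ ξ in Ioi 0, |φ ξ|) (∫ ξ in Ioi 0, |φ' ξ|) / (1 + |z|) :=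
        abs_integral_Ioi_mul_cos_le (fun x _ => hasDerivAt_exp_neg_one_add_mul_rpow_sub hα s x)
          hφ hφ' z
    _ ≤ 2 * (max K 2 * s⁻¹) / (1 + |z|) := by
        gcongr
        exact max_le (hφ_int.trans (by gcongr; exact le_max_left _ _))
          (hφ'_int.trans (by gcongr; exact le_max_right _ _))
    _ = 2 * max K 2 * (s⁻¹ * (1 + |z|)⁻¹) := by ring

end ExpRpow

theorem integral_exp_neg_mul_abs_rpow_mul_cos (α t x : ℝ) :
    ∫ ξ, exp (-t * |ξ| ^ α) * cos (ξ * x) = 2 * ∫ ξ in Ioi 0, exp (-t * ξ ^ α) * cos (ξ * x) := by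
  rw [← integral_comp_abs (f := fun r => exp (-t * r ^ α) * cos (r * x))]
  congr 1 with ξ
  rcases abs_choice ξ with h | h <;> simp [h]

section Fourier

variable {G : ℝ → ℝ → ℝ} {α : ℝ}

theorem exists_abs_sub_le_of_fourier
    (hG : ∀ t > (0 : ℝ), ∀ x : ℝ,
      G t x = (1 / (2 * Real.pi)) * ∫ ξ : ℝ, Real.exp (-t * |ξ| ^ α) * Real.cos (ξ * x))
    (hα : 1 ≤ α) :
    ∃ M ≥ 0, ∀ s ≥ 1, ∀ z : ℝ, |G (1 + s) z - G s z| ≤ M * (s⁻¹ * (1 + |z|)⁻¹) := by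
  obtain ⟨M, hM, hbound⟩ := exists_abs_integral_Ioi_exp_increment_mul_cos_le hα
  refine ⟨π⁻¹ * M, by positivity, fun s hs z => ?_⟩
  have hint : ∀ t > (0 : ℝ), IntegrableOn (fun ξ => exp (-t * ξ ^ α) * cos (ξ * z)) (Ioi 0) :=
    fun t ht => (integrableOn_exp_neg_mul_rpow (by linarith) ht).mul_bdd (by fun_prop)
      (ae_of_all _ fun _ => abs_cos_le_one _)
  have hdiff : G (1 + s) z - G s z =
      π⁻¹ * ∫ ξ in Ioi 0, (exp (-(1 + s) * ξ ^ α) - exp (-s * ξ ^ α)) * cos (ξ * z) := by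
    simp_rw [sub_mul]
    rw [hG _ (by linarith), hG _ (by linarith), integral_exp_neg_mul_abs_rpow_mul_cos,
      integral_exp_neg_mul_abs_rpow_mul_cos,
      integral_sub (hint _ (by linarith)) (hint _ (by linarith))]
    ring
  rw [hdiff, abs_mul, abs_of_pos (by positivity), mul_assoc]
  exact mul_le_mul_of_nonneg_left (hbound s hs z) (by positivity)

theorem exists_lintegral_rpow_abs_sub_le_of_fourier
    (hG : ∀ t > (0 : ℝ), ∀ x : ℝ,
      G t x = (1 / (2 * Real.pi)) * ∫ ξ : ℝ, Real.exp (-t * |ξ| ^ α) * Real.cos (ξ * x))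
    (hα : 1 ≤ α) {γ : ℝ} (hγ : 1 < γ) :
    ∃ B ≠ ⊤, ∀ s ∈ Ioi (1 : ℝ),
      ∫⁻ z, ENNReal.ofReal (|G (1 + s) z - G s z| ^ γ) ≤ B * ENNReal.ofReal (s ^ (-γ)) := by
  obtain ⟨M, hM, hbound⟩ := exists_abs_sub_le_of_fourier hG hα
  have hJ : ∫⁻ z : ℝ, ENNReal.ofReal ((1 + |z|) ^ (-γ)) < ⊤ := by
    simpa using (integrable_one_add_norm (E := ℝ) (by simpa using hγ)).lintegral_lt_top
  refine ⟨ENNReal.ofReal (M ^ γ) * ∫⁻ z : ℝ, ENNReal.ofReal ((1 + |z|) ^ (-γ)),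
    ENNReal.mul_ne_top ENNReal.ofReal_ne_top hJ.ne, fun s hs => ?_⟩
  have hs₀ : 0 < s := lt_trans one_pos hs
  calc ∫⁻ z, ENNReal.ofReal (|G (1 + s) z - G s z| ^ γ)
      ≤ ∫⁻ z, ENNReal.ofReal (M ^ γ * s ^ (-γ)) * ENNReal.ofReal ((1 + |z|) ^ (-γ)) :=
        lintegral_mono fun z => by
          rw [← ENNReal.ofReal_mul (by positivity)]
          refine ENNReal.ofReal_le_ofReal ((rpow_le_rpow (abs_nonneg _)
            (hbound s (le_of_lt hs) z) (by linarith)).trans_eq ?_)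
          rw [mul_rpow hM (by positivity), mul_rpow (by positivity) (by positivity),
            inv_rpow hs₀.le, inv_rpow (by positivity), ← rpow_neg hs₀.le,
            ← rpow_neg (by positivity)]
          ring
    _ = _ := by
        rw [lintegral_const_mul' _ _ ENNReal.ofReal_ne_top, ENNReal.ofReal_mul (by positivity)]
        ring

end Fourier

section Scaling

variable {G : ℝ → ℝ → ℝ} {W : ℝ → ℝ} {α γ : ℝ}

theorem abs_le_rescale_of_scaling
    (hscaling : ∀ t > (0 : ℝ), ∀ x : ℝ, G t x = t ^ (-(1 / α)) * G 1 (x * t ^ (-(1 / α))))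
    (hW : ∀ x, |G 1 x| ≤ W x) {t : ℝ} (ht : 0 < t) (z : ℝ) :
    |G t z| ≤ |t ^ (-(1 / α)) * W (z * t ^ (-(1 / α)))| := by
  rw [hscaling t ht z, abs_mul, abs_mul]
  exact mul_le_mul_of_nonneg_left ((hW _).trans (le_abs_self _)) (abs_nonneg _)

theorem lintegral_rpow_abs_sub_le_of_scaling
    (hscaling : ∀ t > (0 : ℝ), ∀ x : ℝ, G t x = t ^ (-(1 / α)) * G 1 (x * t ^ (-(1 / α))))
    (hW : ∀ x, |G 1 x| ≤ W x) (hWm : Measurable W) (hα : 0 ≤ α) (hγ : 1 ≤ γ)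
    {s : ℝ} (hs : s ∈ Ioc (0 : ℝ) 1) :
    ∫⁻ z, ENNReal.ofReal (|G (1 + s) z - G s z| ^ γ) ≤
      ENNReal.ofReal (2 ^ γ) * (∫⁻ u, ENNReal.ofReal (|W u| ^ γ)) *
        ENNReal.ofReal (s ^ (-((γ - 1) / α))) := by
  obtain ⟨hs₀, hs₁⟩ := hs
  -- `G` need not be measurable, so the triangle inequality is integrated on measurable majorants.
  set m : ℝ → ℝ → ℝ := fun t z => |t ^ (-(1 / α)) * W (z * t ^ (-(1 / α)))| ^ γ
  have hm : ∀ t, Measurable fun z => ENNReal.ofReal (m t z) := fun t => by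
    simp only [m]; fun_prop
  have hpt : ∀ z, |G (1 + s) z - G s z| ^ γ ≤ 2 ^ (γ - 1) * (m (1 + s) z + m s z) := fun z =>
    (abs_sub_rpow_le hγ).trans <| by
      gcongr <;> exact rpow_le_rpow (abs_nonneg _)
        (abs_le_rescale_of_scaling hscaling hW (by linarith) z) (by linarith)
  have hc : (1 + s) ^ (-((γ - 1) / α)) ≤ s ^ (-((γ - 1) / α)) :=
    rpow_le_rpow_of_nonpos hs₀ (by linarith) (neg_nonpos.mpr (by positivity))
  calc ∫⁻ z, ENNReal.ofReal (|G (1 + s) z - G s z| ^ γ)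
      ≤ ∫⁻ z, ENNReal.ofReal (2 ^ (γ - 1)) * (ENNReal.ofReal (m (1 + s) z) +
          ENNReal.ofReal (m s z)) := lintegral_mono fun z => by
        rw [← ENNReal.ofReal_add (by positivity) (by positivity),
          ← ENNReal.ofReal_mul (by positivity)]
        exact ENNReal.ofReal_le_ofReal (hpt z)
    _ = ENNReal.ofReal (2 ^ (γ - 1)) * (ENNReal.ofReal ((1 + s) ^ (-((γ - 1) / α))) +
          ENNReal.ofReal (s ^ (-((γ - 1) / α)))) * ∫⁻ u, ENNReal.ofReal (|W u| ^ γ) := by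
        rw [lintegral_const_mul' _ _ ENNReal.ofReal_ne_top, lintegral_add_left (hm _),
          lintegral_rpow_abs_rescale W (by linarith), lintegral_rpow_abs_rescale W hs₀]
        ring
    _ ≤ ENNReal.ofReal (2 ^ (γ - 1)) * (2 * ENNReal.ofReal (s ^ (-((γ - 1) / α)))) *
          ∫⁻ u, ENNReal.ofReal (|W u| ^ γ) := by
        gcongr
        rw [two_mul]; gcongr
    _ = _ := by
        have h2 : (2 : ℝ) ^ (γ - 1) * 2 = 2 ^ γ := by rw [rpow_sub_one two_ne_zero]; ring
        rw [← ENNReal.ofReal_ofNat 2, ← mul_assoc, ← ENNReal.ofReal_mul (by positivity), h2]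
        ring

end Scaling

theorem temporal_increment_kernel_integrable_general
    (α γ : ℝ) (hα1 : 1 < α)
    (hγ1 : 1 < γ) (hγ2 : γ < α + 1)
    (G : ℝ → ℝ → ℝ)
    (hG : ∀ t > (0 : ℝ), ∀ x : ℝ,
      G t x = (1 / (2 * Real.pi)) * ∫ ξ : ℝ, Real.exp (-t * |ξ| ^ α) * Real.cos (ξ * x))
    (hscaling : ∀ t > (0 : ℝ), ∀ x : ℝ,
      G t x = t ^ (-(1 / α)) * G 1 (x * t ^ (-(1 / α))))
    (hdecay : ∃ C : ℝ, 0 < C ∧ ∀ x : ℝ, |G 1 x| ≤ C * (1 + |x| ^ (1 + α))⁻¹) :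
    (∫⁻ s in Set.Ioi (0 : ℝ), ∫⁻ z : ℝ,
        ENNReal.ofReal (|G (1 + s) z - G s z| ^ γ)) < ⊤ := by
  obtain ⟨C, hC, hG1⟩ := hdecay
  have hJ : ∫⁻ u, ENNReal.ofReal (|C * (1 + |u| ^ (1 + α))⁻¹| ^ γ) < ⊤ :=
    lintegral_rpow_abs_lt_top_of_le (by linarith) hγ1.le fun u => (abs_of_nonneg (by positivity)).le
  have hsmall := fun s (hs : s ∈ Ioc (0 : ℝ) 1) =>
    lintegral_rpow_abs_sub_le_of_scaling hscaling hG1 (by fun_prop (disch := positivity))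
      (by linarith) hγ1.le hs
  obtain ⟨B, hB, hlarge⟩ := exists_lintegral_rpow_abs_sub_le_of_fourier hG hα1.le hγ1
  have hc : (γ - 1) / α < 1 := by rw [div_lt_one (by linarith)]; linarith
  exact setLIntegral_Ioi_lt_top_of_le_rpow hc hγ1
    (ENNReal.mul_ne_top ENNReal.ofReal_ne_top hJ.ne) hB hsmall hlarge

/-- For `α ∈ (1,2)` and `γ ∈ (1, α+1)`, with `G` the fractional heat kernel
(given via the inverse Fourier formula, with scaling property and decay bound),
`∫_0^∞ ∫_ℝ |G(1+s, z) - G(s, z)|^γ dz ds < ∞`. -/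
theorem temporal_increment_kernel_integrable
    (α γ : ℝ) (hα1 : 1 < α) (hα2 : α < 2)
    (hγ1 : 1 < γ) (hγ2 : γ < α + 1)
    (G : ℝ → ℝ → ℝ)
    (hG : ∀ t > (0 : ℝ), ∀ x : ℝ,
      G t x = (1 / (2 * Real.pi)) * ∫ ξ : ℝ, Real.exp (-t * |ξ| ^ α) * Real.cos (ξ * x))
    (hscaling : ∀ t > (0 : ℝ), ∀ x : ℝ,
      G t x = t ^ (-(1 / α)) * G 1 (x * t ^ (-(1 / α))))
    (hdecay : ∃ C : ℝ, 0 < C ∧ ∀ x : ℝ, |G 1 x| ≤ C * (1 + |x| ^ (1 + α))⁻¹) :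
    (∫⁻ s in Set.Ioi (0 : ℝ), ∫⁻ z : ℝ,
        ENNReal.ofReal (|G (1 + s) z - G s z| ^ γ)) < ⊤ :=
  temporal_increment_kernel_integrable_general α γ hα1 hγ1 hγ2 G hG hscaling hdecay
end

section
/- For α ∈ (1,2), t > s > 0, and x ∈ ℝ: ∫_0^s ∫_ℝ G_α(t-r, x-z) G_α(s-r, x-z) dz dr = Γ(1/α)/(2π(α-1)) · ((t+s)^{(α-1)/α} - (t-s)^{(α-1)/α}). -/
open MeasureTheory Real

/-- For `α ∈ (1,2)`, `t > s > 0` and `x ∈ ℝ`, with `G` the fractional heat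
kernel (inverse Fourier formula, symmetric in space, semigroup property):
`∫_0^s ∫_ℝ G(t-r, x-z) G(s-r, x-z) dz dr
  = Γ(1/α)/(2π(α-1)) · ((t+s)^((α-1)/α) - (t-s)^((α-1)/α))`. -/
theorem covariance_integral_of_kernels
    (α : ℝ) (hα1 : 1 < α) (hα2 : α < 2)
    (G : ℝ → ℝ → ℝ)
    (hG : ∀ u > (0 : ℝ), ∀ y : ℝ,
      G u y = (1 / (2 * Real.pi)) * ∫ ξ : ℝ, Real.exp (-u * |ξ| ^ α) * Real.cos (ξ * y))
    (hsymm : ∀ u > (0 : ℝ), ∀ y : ℝ, G u (-y) = G u y)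
    (hsemigroup : ∀ u > (0 : ℝ), ∀ v > (0 : ℝ), ∀ y : ℝ,
      (∫ z : ℝ, G u z * G v (y - z)) = G (u + v) y)
    (s t x : ℝ) (hs : 0 < s) (hst : s < t) :
    (∫ r in Set.Ioc (0 : ℝ) s, ∫ z : ℝ, G (t - r) (x - z) * G (s - r) (x - z)) =
      Real.Gamma (1 / α) / (2 * Real.pi * (α - 1)) *
        ((t + s) ^ ((α - 1) / α) - (t - s) ^ ((α - 1) / α)) := by
  have hαpos : (0 : ℝ) < α := lt_trans one_pos hα1
  -- value of the kernel at 0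
  have hG0 : ∀ w > (0 : ℝ), G w 0 = Real.Gamma (1/α + 1) / Real.pi * w ^ (-1/α) := by
    intro w hw
    rw [hG w hw 0]
    simp only [mul_zero, Real.cos_zero, mul_one]
    rw [integral_comp_abs (f := fun ξ => Real.exp (-w * ξ ^ α)),
      integral_exp_neg_mul_rpow hαpos hw]
    have hπ : Real.pi ≠ 0 := Real.pi_ne_zero
    field_simp
  -- inner spatial integral
  have key : ∀ r ∈ Set.Ioo (0:ℝ) s,
      (∫ z : ℝ, G (t - r) (x - z) * G (s - r) (x - z)) = G (t + s - 2*r) 0 := by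
    intro r hr
    have hu : 0 < t - r := by linarith [hr.2]
    have hv : 0 < s - r := by linarith [hr.2]
    have h1 : (∫ z : ℝ, G (t - r) (x - z) * G (s - r) (x - z))
        = ∫ z : ℝ, G (t - r) z * G (s - r) z :=
      integral_sub_left_eq_self (fun z => G (t - r) z * G (s - r) z) volume x
    have h2 : (∫ z : ℝ, G (t - r) z * G (s - r) z)
        = ∫ z : ℝ, G (t - r) z * G (s - r) (0 - z) := by
      congr 1; funext z
      rw [zero_sub, hsymm _ hv]
    rw [h1, h2, hsemigroup _ hu _ hv 0]
    ring_nf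
  -- reduce to interval integral
  have hIoo : (∫ r in Set.Ioc (0 : ℝ) s, ∫ z : ℝ, G (t - r) (x - z) * G (s - r) (x - z))
      = ∫ r in Set.Ioo (0 : ℝ) s,
          Real.Gamma (1/α + 1) / Real.pi * (t + s - 2*r) ^ (-1/α) := by
    rw [integral_Ioc_eq_integral_Ioo]
    refine setIntegral_congr_fun measurableSet_Ioo (fun r hr => ?_)
    rw [key r hr, hG0 _ (by nlinarith [hr.2] : (0:ℝ) < t + s - 2*r)]
  rw [hIoo, ← integral_Ioc_eq_integral_Ioo, ← intervalIntegral.integral_of_le hs.le]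
  rw [intervalIntegral.integral_const_mul]
  rw [intervalIntegral.integral_comp_sub_mul (fun u => u ^ (-1/α)) (two_ne_zero) (t+s)]
  have h0s : t + s - 2 * 0 = t + s := by ring
  have hss : t + s - 2 * s = t - s := by ring
  rw [h0s, hss]
  rw [_root_.integral_rpow (Or.inl (by
    have h1 : 1/α < 1 := by rw [div_lt_one hαpos]; exact hα1
    have : -1/α = -(1/α) := by ring
    rw [this]; linarith))]
  have hexp : -1/α + 1 = (α - 1)/α := by field_simp; ring
  rw [hexp, Real.Gamma_add_one (by positivity : (1:ℝ)/α ≠ 0)]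
  have hπ : Real.pi ≠ 0 := Real.pi_ne_zero
  have hΓ : Real.Gamma (1/α) ≠ 0 := (Real.Gamma_pos_of_pos (by positivity)).ne'
  have hα1' : α - 1 ≠ 0 := by linarith
  rw [smul_eq_mul]
  field_simp
end

section
/- For α ∈ (1,2), δ > 0, and t with δ^κ ≤ t (κ = 2α/(3α-1)): ∫_0^{t-δ^κ} ∫_ℝ (e^{-(t+δ-r)|ξ|^α} - e^{-(t-r)|ξ|^α})^2 dξ dr ≤ ∫_ℝ (δ²|ξ|^α/2) e^{-2δ^κ|ξ|^α} dξ ≤ C_α δ^{4(α-1)/(3α-1)} for a constant C_α depending only on α. -/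
open MeasureTheory Real

/-!
With `c = |ξ|^α` and `u = t - r ≥ δ^κ`, the integrand is `e^{-2uc} (1 - e^{-δc})² ≤ δ²c² e^{-2uc}`,
whose integral over `r ∈ (0, t - δ^κ]` is at most `δ²c e^{-2δ^κ c} / 2`; exchanging the order of
integration gives the first inequality. The middle integral is a Gamma integral,
`∫ |ξ|^α e^{-b|ξ|^α} dξ = (2/α) Γ((α+1)/α) b^{-(α+1)/α}`, and for `b = 2δ^κ` the resulting power
of `δ` is `δ^{2 - κ(α+1)/α} = δ^{4(α-1)/(3α-1)}`, so the second inequality holds with equality.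
-/

open Set

lemma sq_exp_neg_sub_exp_neg_le {δ c : ℝ} (hδ : 0 ≤ δ) (hc : 0 ≤ c) (u : ℝ) :
    (exp (-(u + δ) * c) - exp (-u * c)) ^ 2 ≤ (δ * c) ^ 2 * exp (-2 * u * c) := by
  have hfactor : exp (-(u + δ) * c) - exp (-u * c) = -(exp (-u * c) * (1 - exp (-(δ * c)))) := by
    rw [mul_sub, mul_one, ← exp_add]
    ring_nf
  have hsq : exp (-2 * u * c) = exp (-u * c) ^ 2 := by
    rw [sq, ← exp_add]
    ring_nf
  have hnonneg : 0 ≤ 1 - exp (-(δ * c)) := by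
    rw [sub_nonneg, exp_le_one_iff, neg_nonpos]
    positivity
  have hle : 1 - exp (-(δ * c)) ≤ δ * c := by linarith [one_sub_le_exp_neg (δ * c)]
  rw [hfactor, neg_sq, mul_pow, hsq, mul_comm]
  exact mul_le_mul_of_nonneg_right (pow_le_pow_left₀ hnonneg hle 2) (sq_nonneg _)

lemma setIntegral_Ioc_exp_le {c : ℝ} (hc : 0 < c) (s t : ℝ) :
    ∫ r in Ioc 0 (t - s), exp (-2 * (t - r) * c) ≤ exp (-2 * s * c) / (2 * c) := by
  have hsplit : ∀ r, exp (-2 * (t - r) * c) = exp (-2 * t * c) * exp (2 * c * r) := fun r => by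
    rw [← exp_add]
    ring_nf
  have hint : IntegrableOn (fun r => exp (-2 * (t - r) * c)) (Iic (t - s)) := by
    simp_rw [hsplit]
    exact (integrableOn_exp_mul_Iic (by positivity) _).const_mul _
  calc ∫ r in Ioc 0 (t - s), exp (-2 * (t - r) * c)
      ≤ ∫ r in Iic (t - s), exp (-2 * (t - r) * c) :=
        setIntegral_mono_set hint (ae_of_all _ fun r => (exp_pos _).le)
          Ioc_subset_Iic_self.eventuallyLE
    _ = exp (-2 * s * c) / (2 * c) := by
        simp_rw [hsplit]
        rw [integral_const_mul, integral_exp_mul_Iic (by positivity), ← mul_div_assoc, ← exp_add]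
        ring_nf

lemma setIntegral_sq_exp_neg_sub_exp_neg_le {δ c : ℝ} (hδ : 0 ≤ δ) (hc : 0 ≤ c) (s t : ℝ) :
    ∫ r in Ioc 0 (t - s), (exp (-(t + δ - r) * c) - exp (-(t - r) * c)) ^ 2
      ≤ δ ^ 2 * c / 2 * exp (-2 * s * c) := by
  rcases hc.eq_or_lt with rfl | hc
  · simp
  calc ∫ r in Ioc 0 (t - s), (exp (-(t + δ - r) * c) - exp (-(t - r) * c)) ^ 2
      ≤ ∫ r in Ioc 0 (t - s), (δ * c) ^ 2 * exp (-2 * (t - r) * c) := by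
        refine setIntegral_mono (Continuous.integrableOn_Ioc (by fun_prop))
          (Continuous.integrableOn_Ioc (by fun_prop)) fun r => ?_
        rw [show t + δ - r = t - r + δ by ring]
        exact sq_exp_neg_sub_exp_neg_le hδ hc.le (t - r)
    _ ≤ (δ * c) ^ 2 * (exp (-2 * s * c) / (2 * c)) := by
        rw [integral_const_mul]
        exact mul_le_mul_of_nonneg_left (setIntegral_Ioc_exp_le hc s t) (sq_nonneg _)
    _ = δ ^ 2 * c / 2 * exp (-2 * s * c) := by
        field_simp

theorem setIntegral_integral_sq_exp_neg_sub_exp_neg_le {X : Type*} [MeasurableSpace X]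
    {μ : Measure X} [SFinite μ] {c : X → ℝ} {δ s : ℝ} (hcm : Measurable c) (hc : ∀ x, 0 ≤ c x)
    (hint : Integrable (fun x => c x * exp (-2 * s * c x)) μ) (hδ : 0 ≤ δ) (t : ℝ) :
    ∫ r in Ioc 0 (t - s), ∫ x, (exp (-(t + δ - r) * c x) - exp (-(t - r) * c x)) ^ 2 ∂μ
      ≤ ∫ x, δ ^ 2 * c x / 2 * exp (-2 * s * c x) ∂μ := by
  set F : ℝ → X → ℝ := fun r x => (exp (-(t + δ - r) * c x) - exp (-(t - r) * c x)) ^ 2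
    with hF_def
  have hF_meas : Measurable (Function.uncurry F) := by
    simp only [hF_def, Function.uncurry_def]
    fun_prop
  have hbound : ∀ x, ∫ r in Ioc 0 (t - s), F r x ≤ δ ^ 2 * c x / 2 * exp (-2 * s * c x) :=
    fun x => setIntegral_sq_exp_neg_sub_exp_neg_le hδ (hc x) s t
  have hmajor : Integrable (fun x => δ ^ 2 * c x / 2 * exp (-2 * s * c x)) μ := by
    simpa only [mul_div_right_comm, mul_assoc] using hint.const_mul (δ ^ 2 / 2)
  have hF : Integrable (Function.uncurry F) ((volume.restrict (Ioc 0 (t - s))).prod μ) := by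
    refine (integrable_prod_iff' hF_meas.aestronglyMeasurable).2
      ⟨ae_of_all _ fun x => Continuous.integrableOn_Ioc (by simp only [hF_def]; fun_prop),
        hmajor.mono' (hF_meas.norm.stronglyMeasurable.integral_prod_left').aestronglyMeasurable
          (ae_of_all _ fun x => ?_)⟩
    have hF_nonneg : ∀ r, 0 ≤ F r x := fun r => sq_nonneg _
    simp only [Function.uncurry_apply_pair, Real.norm_eq_abs, abs_of_nonneg (hF_nonneg _),
      abs_of_nonneg (setIntegral_nonneg measurableSet_Ioc fun r _ => hF_nonneg r)]
    exact hbound x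
  calc ∫ r in Ioc 0 (t - s), ∫ x, F r x ∂μ = ∫ x, (∫ r in Ioc 0 (t - s), F r x) ∂μ :=
        integral_integral_swap hF
    _ ≤ ∫ x, δ ^ 2 * c x / 2 * exp (-2 * s * c x) ∂μ :=
        integral_mono_of_nonneg (ae_of_all _ fun x => integral_nonneg fun r => sq_nonneg _)
          hmajor (ae_of_all _ hbound)

lemma integral_abs_rpow_mul_exp_neg_mul_abs_rpow {α b : ℝ} (hα : 0 < α) (hb : 0 < b) :
    ∫ ξ : ℝ, |ξ| ^ α * exp (-b * |ξ| ^ α) = 2 / α * Gamma ((α + 1) / α) * b ^ (-(α + 1) / α) := by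
  rw [integral_comp_abs (f := fun x => x ^ α * exp (-b * x ^ α)),
    integral_rpow_mul_exp_neg_mul_rpow hα (by linarith) hb]
  ring

lemma integrable_abs_rpow_mul_exp_neg_mul_abs_rpow {α b : ℝ} (hα : 0 < α) (hb : 0 < b) :
    Integrable fun ξ : ℝ => |ξ| ^ α * exp (-b * |ξ| ^ α) := by
  refine Integrable.of_integral_ne_zero ?_
  rw [integral_abs_rpow_mul_exp_neg_mul_abs_rpow hα hb]
  have := Gamma_pos_of_pos (by positivity : 0 < (α + 1) / α)
  positivity

theorem kernel_difference_integral_bound_general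
    (α κ : ℝ) (hα1 : 1 < α) (hκ : κ = 2 * α / (3 * α - 1)) :
    ∃ C : ℝ, 0 < C ∧ ∀ δ t : ℝ, 0 < δ → δ ≤ 1 → δ ^ κ ≤ t →
      (∫ r in Set.Ioc (0 : ℝ) (t - δ ^ κ), ∫ ξ : ℝ,
          (Real.exp (-(t + δ - r) * |ξ| ^ α) - Real.exp (-(t - r) * |ξ| ^ α)) ^ 2)
        ≤ (∫ ξ : ℝ, (δ ^ 2 * |ξ| ^ α / 2) * Real.exp (-2 * δ ^ κ * |ξ| ^ α)) ∧
      (∫ ξ : ℝ, (δ ^ 2 * |ξ| ^ α / 2) * Real.exp (-2 * δ ^ κ * |ξ| ^ α))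
        ≤ C * δ ^ (4 * (α - 1) / (3 * α - 1)) := by
  have hα : 0 < α := by linarith
  have hΓ := Gamma_pos_of_pos (by positivity : 0 < (α + 1) / α)
  refine ⟨Gamma ((α + 1) / α) / α * 2 ^ (-(α + 1) / α), by positivity,
    fun δ t hδ _ _ => ⟨?_, le_of_eq ?_⟩⟩
  · refine setIntegral_integral_sq_exp_neg_sub_exp_neg_le (by fun_prop)
      (fun ξ => by positivity) ?_ hδ.le t
    simpa only [neg_mul] using
      integrable_abs_rpow_mul_exp_neg_mul_abs_rpow hα (by positivity : 0 < 2 * δ ^ κ)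
  · have hexponent : (2 : ℝ) + κ * (-(α + 1) / α) = 4 * (α - 1) / (3 * α - 1) := by
      have : α * 3 - 1 ≠ 0 := by linarith
      rw [hκ]
      field_simp
      ring
    have hintegrand : (fun ξ : ℝ => δ ^ 2 * |ξ| ^ α / 2 * exp (-2 * δ ^ κ * |ξ| ^ α)) =
        fun ξ => δ ^ 2 / 2 * (|ξ| ^ α * exp (-(2 * δ ^ κ) * |ξ| ^ α)) := by
      funext ξ
      rw [neg_mul 2]
      ring
    rw [hintegrand, integral_const_mul,
      integral_abs_rpow_mul_exp_neg_mul_abs_rpow hα (by positivity),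
      mul_rpow zero_le_two (by positivity), ← rpow_mul hδ.le, ← hexponent, rpow_add hδ, rpow_two]
    field_simp

/-- For `α ∈ (1,2)`, `κ = 2α/(3α-1)`, there is a constant `C_α > 0` such that
for all `δ ∈ (0,1]` and `t` with `δ^κ ≤ t`:
`∫_0^(t-δ^κ) ∫_ℝ (e^(-(t+δ-r)|ξ|^α) - e^(-(t-r)|ξ|^α))² dξ dr
  ≤ ∫_ℝ (δ²|ξ|^α/2) e^(-2δ^κ|ξ|^α) dξ ≤ C_α δ^(4(α-1)/(3α-1))`. -/
theorem kernel_difference_integral_bound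
    (α κ : ℝ) (hα1 : 1 < α) (hα2 : α < 2) (hκ : κ = 2 * α / (3 * α - 1)) :
    ∃ C : ℝ, 0 < C ∧ ∀ δ t : ℝ, 0 < δ → δ ≤ 1 → δ ^ κ ≤ t →
      (∫ r in Set.Ioc (0 : ℝ) (t - δ ^ κ), ∫ ξ : ℝ,
          (Real.exp (-(t + δ - r) * |ξ| ^ α) - Real.exp (-(t - r) * |ξ| ^ α)) ^ 2)
        ≤ (∫ ξ : ℝ, (δ ^ 2 * |ξ| ^ α / 2) * Real.exp (-2 * δ ^ κ * |ξ| ^ α)) ∧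
      (∫ ξ : ℝ, (δ ^ 2 * |ξ| ^ α / 2) * Real.exp (-2 * δ ^ κ * |ξ| ^ α))
        ≤ C * δ ^ (4 * (α - 1) / (3 * α - 1)) :=
  kernel_difference_integral_bound_general α κ hα1 hκ
end

section
/- For α ∈ (1,2), δ > 0, t > 0, and x ∈ ℝ: ∫_{t-δ^κ}^{t+δ} ∫_ℝ G_α(t+δ-r, x-z)^2 |x-z|^{α-1} dz dr ≤ C_α δ^{2κ(α-1)/α}, where κ = 2α/(3α-1), provided δ^κ ≤ t, with C_α = c_α ∫_ℝ (1+|z|^{1+α})^{-2}|z|^α dz · (α/(2α-2)) · constants depending only on α. -/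
open MeasureTheory Real

/-- For `α ∈ (1,2)` and `κ = 2α/(3α-1)`, with `G` the fractional heat kernel
(scaling property and decay bound), there is a constant `C_α > 0` such that for
all `δ ∈ (0,1]`, `t > 0` with `δ^κ ≤ t`, and `x ∈ ℝ`:
`∫_(t-δ^κ)^(t+δ) ∫_ℝ G(t+δ-r, x-z)² |x-z|^(α-1) dz dr ≤ C_α δ^(2κ(α-1)/α)`. -/
theorem weighted_kernel_square_integral_bound
    (α κ : ℝ) (hα1 : 1 < α) (hα2 : α < 2) (hκ : κ = 2 * α / (3 * α - 1))
    (G : ℝ → ℝ → ℝ)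
    (hscaling : ∀ u > (0 : ℝ), ∀ y : ℝ,
      G u y = u ^ (-(1 / α)) * G 1 (y * u ^ (-(1 / α))))
    (hdecay : ∃ c : ℝ, 0 < c ∧ ∀ y : ℝ, |G 1 y| ≤ c * (1 + |y| ^ (1 + α))⁻¹) :
    ∃ C : ℝ, 0 < C ∧ ∀ δ t x : ℝ, 0 < δ → δ ≤ 1 → δ ^ κ ≤ t →
      (∫ r in Set.Ioc (t - δ ^ κ) (t + δ), ∫ z : ℝ,
          (G (t + δ - r) (x - z)) ^ 2 * |x - z| ^ (α - 1))
        ≤ C * δ ^ (2 * κ * (α - 1) / α) := by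
  obtain ⟨c, hc, hGc⟩ := hdecay
  have hα0 : (0:ℝ) < α := by linarith
  set p : ℝ := (α - 2) / α with hp
  have hp1 : -1 < p := by
    rw [hp, lt_div_iff₀ hα0]; linarith
  have hp1' : 0 < p + 1 := by linarith
  -- the profile function
  set F : ℝ → ℝ := fun w => ((1 + |w| ^ (1 + α))⁻¹) ^ 2 * |w| ^ (α - 1) with hF
  have hFnonneg : ∀ w, 0 ≤ F w := by
    intro w
    have := Real.rpow_nonneg (abs_nonneg w) (α - 1)
    positivity
  have hden : ∀ w : ℝ, (0:ℝ) < 1 + |w| ^ (1 + α) := by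
    intro w
    have := Real.rpow_nonneg (abs_nonneg w) (1 + α)
    linarith
  have hFle : ∀ w, F w ≤ 2 * (1 + w ^ 2)⁻¹ := by
    intro w
    rcases le_or_gt |w| 1 with h | h
    · have e1 : (1 + |w| ^ (1 + α))⁻¹ ≤ 1 := by
        apply inv_le_one_of_one_le₀
        have := Real.rpow_nonneg (abs_nonneg w) (1 + α); linarith
      have e2 : |w| ^ (α - 1) ≤ 1 :=
        Real.rpow_le_one (abs_nonneg w) h (by linarith)
      have e3 : F w ≤ 1 := by
        calc F w ≤ 1 ^ 2 * 1 := by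
              apply mul_le_mul _ e2 (Real.rpow_nonneg (abs_nonneg w) _) (by norm_num)
              exact pow_le_pow_left₀ (by positivity) e1 2
          _ = 1 := by norm_num
      have e4 : (1:ℝ) ≤ 2 * (1 + w ^ 2)⁻¹ := by
        rw [← sq_abs] at *
        have hw2 : |w| ^ 2 ≤ 1 := by nlinarith [abs_nonneg w]
        have h5 : (0:ℝ) < 1 + |w| ^ 2 := by positivity
        rw [le_mul_inv_iff₀ h5]; linarith
      linarith
    · have hw0 : (0:ℝ) < |w| := by linarith
      have e1 : (1 + |w| ^ (1 + α))⁻¹ ≤ (|w| ^ (1 + α))⁻¹ := by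
        apply inv_anti₀ (Real.rpow_pos_of_pos hw0 _)
        linarith
      have e2 : F w ≤ ((|w| ^ (1 + α))⁻¹) ^ 2 * |w| ^ (α - 1) := by
        apply mul_le_mul_of_nonneg_right _ (Real.rpow_nonneg (abs_nonneg w) _)
        exact pow_le_pow_left₀ (by positivity) e1 2
      have e3 : ((|w| ^ (1 + α))⁻¹) ^ 2 * |w| ^ (α - 1) = |w| ^ (-(α + 3)) := by
        rw [← Real.rpow_neg (abs_nonneg w), ← Real.rpow_natCast (|w| ^ (-(1 + α))) 2,
          ← Real.rpow_mul (abs_nonneg w), ← Real.rpow_add hw0]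
        congr 1; push_cast; ring
      have e4 : |w| ^ (-(α + 3)) ≤ |w| ^ (-(2:ℝ)) :=
        Real.rpow_le_rpow_of_exponent_le h.le (by linarith)
      have e5 : |w| ^ (-(2:ℝ)) = (w ^ 2)⁻¹ := by
        rw [Real.rpow_neg (abs_nonneg w)]
        congr 1
        rw [show ((2:ℝ)) = ((2:ℕ):ℝ) by norm_num, Real.rpow_natCast, sq_abs]
      have e6 : (w ^ 2)⁻¹ ≤ 2 * (1 + w ^ 2)⁻¹ := by
        have hw2 : (1:ℝ) ≤ w ^ 2 := by nlinarith [sq_abs w]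
        rw [inv_eq_one_div, show 2 * (1 + w ^ 2)⁻¹ = 2 / (1 + w ^ 2) by ring,
          div_le_div_iff₀ (by nlinarith) (by nlinarith)]
        nlinarith
      calc F w ≤ ((|w| ^ (1 + α))⁻¹) ^ 2 * |w| ^ (α - 1) := e2
        _ = |w| ^ (-(α + 3)) := e3
        _ ≤ |w| ^ (-(2:ℝ)) := e4
        _ = (w ^ 2)⁻¹ := e5
        _ ≤ 2 * (1 + w ^ 2)⁻¹ := e6
  have hFcont : Continuous F := by
    apply Continuous.mul
    · apply Continuous.pow
      apply Continuous.inv₀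
      · exact continuous_const.add (continuous_abs.rpow_const fun w => Or.inr (by linarith))
      · intro w; exact ne_of_gt (hden w)
    · exact continuous_abs.rpow_const fun w => Or.inr (by linarith)
  have hFint : Integrable F := by
    apply Integrable.mono' (integrable_inv_one_add_sq.const_mul 2)
      hFcont.aestronglyMeasurable
    filter_upwards with w
    rw [Real.norm_of_nonneg (hFnonneg w)]
    exact hFle w
  set I : ℝ := ∫ w, F w with hI
  have hI0 : 0 ≤ I := integral_nonneg hFnonneg
  have hCnn : 0 ≤ c ^ 2 * I * 2 ^ (p + 1) / (p + 1) := by positivity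
  refine ⟨c ^ 2 * I * 2 ^ (p + 1) / (p + 1) + 1, by linarith, ?_⟩
  intro δ t x hδ hδ1 hδt
  set a := t - δ ^ κ with ha
  set b := t + δ with hb
  have hδκ0 : 0 < δ ^ κ := Real.rpow_pos_of_pos hδ κ
  have hab : a ≤ b := by rw [ha, hb]; linarith
  have hκ1 : κ ≤ 1 := by
    rw [hκ, div_le_one (by linarith)]; linarith
  have hδle : δ ≤ δ ^ κ := by
    nth_rewrite 1 [← Real.rpow_one δ]
    exact Real.rpow_le_rpow_of_exponent_ge hδ hδ1 hκ1
  -- inner bound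
  have inner_le : ∀ r ∈ Set.Ioo a b,
      (∫ z : ℝ, (G (t + δ - r) (x - z)) ^ 2 * |x - z| ^ (α - 1))
        ≤ c ^ 2 * I * (t + δ - r) ^ p := by
    intro r hr
    set u := t + δ - r with hu
    have hu0 : 0 < u := by rw [hu]; have := hr.2; rw [hb] at this; linarith
    set s := u ^ (-(1 / α)) with hs
    have hs0 : 0 < s := Real.rpow_pos_of_pos hu0 _
    have hpt : ∀ z : ℝ, (G u (x - z)) ^ 2 * |x - z| ^ (α - 1)
        ≤ c ^ 2 * u ^ ((α - 3) / α) * F ((x - z) * s) := by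
      intro z
      rw [hscaling u hu0]
      set w := (x - z) * s with hw
      have habs : |x - z| = |w| * u ^ (1 / α) := by
        rw [hw, abs_mul, abs_of_pos hs0, mul_assoc, hs, ← Real.rpow_add hu0]
        norm_num
      have hxz : |x - z| ^ (α - 1) = |w| ^ (α - 1) * u ^ ((α - 1) / α) := by
        rw [habs, Real.mul_rpow (abs_nonneg w) (Real.rpow_nonneg hu0.le _)]
        congr 1
        rw [← Real.rpow_mul hu0.le]
        congr 1; ring
      have hs2 : s ^ 2 = u ^ (-(2 / α)) := by
        rw [hs, ← Real.rpow_natCast (u ^ (-(1 / α))) 2, ← Real.rpow_mul hu0.le]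
        congr 1; push_cast; ring
      have key : (G 1 w) ^ 2 ≤ c ^ 2 * ((1 + |w| ^ (1 + α))⁻¹) ^ 2 := by
        calc (G 1 w) ^ 2 = |G 1 w| ^ 2 := (sq_abs _).symm
          _ ≤ (c * (1 + |w| ^ (1 + α))⁻¹) ^ 2 :=
              pow_le_pow_left₀ (abs_nonneg _) (hGc w) 2
          _ = c ^ 2 * ((1 + |w| ^ (1 + α))⁻¹) ^ 2 := mul_pow _ _ 2
      calc (u ^ (-(1 / α)) * G 1 w) ^ 2 * |x - z| ^ (α - 1)
          = (G 1 w) ^ 2 * (s ^ 2 * |x - z| ^ (α - 1)) := by rw [hs]; ring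
        _ ≤ (c ^ 2 * ((1 + |w| ^ (1 + α))⁻¹) ^ 2) * (s ^ 2 * |x - z| ^ (α - 1)) := by
            apply mul_le_mul_of_nonneg_right key
            have := Real.rpow_nonneg (abs_nonneg (x - z)) (α - 1)
            positivity
        _ = c ^ 2 * u ^ ((α - 3) / α) * F w := by
            rw [hF, hxz, hs2]
            have : u ^ (-(2 / α)) * u ^ ((α - 1) / α) = u ^ ((α - 3) / α) := by
              rw [← Real.rpow_add hu0]; congr 1; field_simp; ring
            calc c ^ 2 * ((1 + |w| ^ (1 + α))⁻¹) ^ 2 *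
                  (u ^ (-(2 / α)) * (|w| ^ (α - 1) * u ^ ((α - 1) / α)))
                = c ^ 2 * (u ^ (-(2 / α)) * u ^ ((α - 1) / α)) *
                    (((1 + |w| ^ (1 + α))⁻¹) ^ 2 * |w| ^ (α - 1)) := by ring
              _ = c ^ 2 * u ^ ((α - 3) / α) *
                    (((1 + |w| ^ (1 + α))⁻¹) ^ 2 * |w| ^ (α - 1)) := by rw [this]
    have hFs : Integrable fun z : ℝ => F ((x - z) * s) := by
      have h1 : Integrable fun w : ℝ => F (w * s) :=
        (integrable_comp_mul_right_iff F (ne_of_gt hs0)).2 hFint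
      exact h1.comp_sub_left x
    have hg_int : Integrable fun z : ℝ => c ^ 2 * u ^ ((α - 3) / α) * F ((x - z) * s) :=
      hFs.const_mul _
    have hval : (∫ z : ℝ, c ^ 2 * u ^ ((α - 3) / α) * F ((x - z) * s))
        = c ^ 2 * I * u ^ p := by
      rw [integral_const_mul]
      have e1 : (∫ z : ℝ, F ((x - z) * s)) = ∫ z : ℝ, F (z * s) :=
        integral_sub_left_eq_self (fun w => F (w * s)) volume x
      have e2 : (∫ z : ℝ, F (z * s)) = |s⁻¹| • I := Measure.integral_comp_mul_right F s
      have e3 : |s⁻¹| = u ^ (1 / α) := by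
        rw [abs_of_pos (inv_pos.2 hs0), hs, ← Real.rpow_neg hu0.le, neg_neg]
      rw [e1, e2, e3, smul_eq_mul]
      rw [show c ^ 2 * u ^ ((α - 3) / α) * (u ^ (1 / α) * I)
          = c ^ 2 * I * (u ^ ((α - 3) / α) * u ^ (1 / α)) by ring,
        ← Real.rpow_add hu0]
      congr 1
      rw [hp]; field_simp; ring
    calc (∫ z : ℝ, (G u (x - z)) ^ 2 * |x - z| ^ (α - 1))
        ≤ ∫ z : ℝ, c ^ 2 * u ^ ((α - 3) / α) * F ((x - z) * s) := by
          apply integral_mono_of_nonneg _ hg_int (ae_of_all _ hpt)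
          filter_upwards with z
          have := Real.rpow_nonneg (abs_nonneg (x - z)) (α - 1)
          positivity
      _ = c ^ 2 * I * u ^ p := hval
  -- outer integrable bound function
  have houter_int : IntegrableOn (fun r => c ^ 2 * I * (b - r) ^ p) (Set.Ioc a b) := by
    have h1 : IntervalIntegrable (fun y : ℝ => y ^ p) volume (b - b) (b - a) :=
      intervalIntegral.intervalIntegrable_rpow' hp1
    have h2 : IntervalIntegrable (fun r : ℝ => (b - r) ^ p) volume a b := by
      have := (h1.comp_sub_left b).symm
      simpa using this
    exact (h2.const_mul (c ^ 2 * I)).1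
  have houter : (∫ r in Set.Ioc a b, ∫ z : ℝ,
        (G (t + δ - r) (x - z)) ^ 2 * |x - z| ^ (α - 1))
      ≤ ∫ r in Set.Ioc a b, c ^ 2 * I * (b - r) ^ p := by
    apply integral_mono_of_nonneg _ houter_int _
    · filter_upwards with r
      apply integral_nonneg
      intro z
      have := Real.rpow_nonneg (abs_nonneg (x - z)) (α - 1)
      positivity
    · have h1 : ∀ᵐ r ∂volume.restrict (Set.Ioc a b), r ∈ Set.Ioc a b :=
        ae_restrict_mem measurableSet_Ioc
      have h2 : ∀ᵐ r ∂volume.restrict (Set.Ioc a b), r ≠ b :=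
        ae_restrict_of_ae (by
          rw [MeasureTheory.ae_iff]
          have he : {r : ℝ | ¬ r ≠ b} = {b} := by ext r; simp
          rw [he]
          exact measure_singleton b)
      filter_upwards [h1, h2] with r hr hne
      have : r ∈ Set.Ioo a b := ⟨hr.1, lt_of_le_of_ne hr.2 hne⟩
      exact inner_le r this
  have hcompute : (∫ r in Set.Ioc a b, c ^ 2 * I * (b - r) ^ p)
      = c ^ 2 * I * ((b - a) ^ (p + 1) / (p + 1)) := by
    rw [integral_const_mul]
    congr 1
    rw [← intervalIntegral.integral_of_le hab,
      intervalIntegral.integral_comp_sub_left (fun y : ℝ => y ^ p) b,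
      integral_rpow (Or.inl hp1), sub_self,
      Real.zero_rpow (by linarith : p + 1 ≠ 0)]
    ring
  have hba : b - a = δ + δ ^ κ := by rw [ha, hb]; ring
  have hfinal : (b - a) ^ (p + 1) ≤ 2 ^ (p + 1) * δ ^ (2 * κ * (α - 1) / α) := by
    have h1 : (b - a) ^ (p + 1) ≤ (2 * δ ^ κ) ^ (p + 1) := by
      apply Real.rpow_le_rpow (by rw [hba]; positivity) _ hp1'.le
      rw [hba]; linarith
    have h2 : (2 * δ ^ κ) ^ (p + 1) = 2 ^ (p + 1) * (δ ^ κ) ^ (p + 1) :=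
      Real.mul_rpow (by norm_num) hδκ0.le
    have h3 : (δ ^ κ) ^ (p + 1) = δ ^ (2 * κ * (α - 1) / α) := by
      rw [← Real.rpow_mul hδ.le]
      congr 1
      rw [hp]; field_simp; ring
    rw [h2, h3] at h1
    exact h1
  have hE0 : 0 < δ ^ (2 * κ * (α - 1) / α) := Real.rpow_pos_of_pos hδ _
  calc (∫ r in Set.Ioc (t - δ ^ κ) (t + δ), ∫ z : ℝ,
          (G (t + δ - r) (x - z)) ^ 2 * |x - z| ^ (α - 1))
      ≤ ∫ r in Set.Ioc a b, c ^ 2 * I * (b - r) ^ p := houter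
    _ = c ^ 2 * I * ((b - a) ^ (p + 1) / (p + 1)) := hcompute
    _ ≤ c ^ 2 * I * (2 ^ (p + 1) * δ ^ (2 * κ * (α - 1) / α) / (p + 1)) := by
        apply mul_le_mul_of_nonneg_left _ (mul_nonneg (by positivity) hI0)
        exact (div_le_div_iff_of_pos_right hp1').2 hfinal
    _ = (c ^ 2 * I * 2 ^ (p + 1) / (p + 1)) * δ ^ (2 * κ * (α - 1) / α) := by ring
    _ ≤ (c ^ 2 * I * 2 ^ (p + 1) / (p + 1) + 1) * δ ^ (2 * κ * (α - 1) / α) := by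
        rw [add_mul, one_mul]; linarith
end
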